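/- arXiv:0807.4073 — 5 statements merged into one kernel-verified Lean document; each statement's English description precedes it below -/
import Mathlib

section
/- Let k be a field, F : kⁿ → kⁿ and H : kⁿ → k linear. Then for each v ∈ kⁿ, the stream σ(m) = H(Fᵐ(v)) is rational, i.e., there exist polynomial streams ρ, τ (streams with finitely many nonzero entries) with τ(0) ≠ 0 such that σ × τ = ρ. -/
/-!
By Cayley–Hamilton the characteristic polynomial `p` of `F` annihilates `F`, so `σ(m) = H(Fᵐ v)`
satisfies the linear recurrence with coefficients those of `p`. Convolving `σ` with the coefficient
stream of the reversed polynomial of `p` evaluates that recurrence in every degree `m ≥ deg p`, so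
the product is polynomial; its constant term is the leading coefficient `1` of `p`.
-/

def conv {A : Type*} [Semiring A] (σ τ : ℕ → A) : ℕ → A :=
  fun n => ∑ i ∈ Finset.range (n + 1), σ i * τ (n - i)

def cst {A : Type*} [Semiring A] (a : A) : ℕ → A :=
  fun n => if n = 0 then a else 0

def Xs {A : Type*} [Semiring A] : ℕ → A :=
  fun n => if n = 1 then 1 else 0

def tl {A : Type*} (σ : ℕ → A) : ℕ → A :=
  fun n => σ (n + 1)

open Polynomial

lemma Polynomial.support_coeff_finite {R : Type*} [Semiring R] (p : R[X]) :
    (Function.support p.coeff).Finite :=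
  p.support.finite_toSet.subset fun _ hi => mem_support_iff.2 hi

lemma conv_iterate_reverse_coeff_eq_zero {R M : Type*} [CommRing R] [AddCommGroup M] [Module R M]
    (F : Module.End R M) (H : M →ₗ[R] R) (v : M) {p : R[X]} (hp : aeval F p = 0) {m : ℕ}
    (hm : p.natDegree ≤ m) : conv (fun i => H ((⇑F)^[i] v)) p.reverse.coeff m = 0 := by
  set N := p.natDegree
  have hsplit : m + 1 = (m - N) + (N + 1) := by omega
  have hlow : ∀ i < m - N, p.reverse.coeff (m - i) = 0 := fun i hi => by
    rw [coeff_reverse, revAt_eq_self_of_lt (by omega)]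
    exact coeff_eq_zero_of_natDegree_lt (by omega)
  have hhigh : ∀ d < N + 1, p.reverse.coeff (m - (m - N + d)) = p.coeff d := fun d hd => by
    rw [coeff_reverse, show m - (m - N + d) = N - d by omega, revAt_le (by omega)]
    congr 1
    omega
  calc conv (fun i => H ((⇑F)^[i] v)) p.reverse.coeff m
      = ∑ d ∈ Finset.range (N + 1), H ((⇑F)^[m - N + d] v) * p.coeff d := by
        rw [conv, hsplit, Finset.sum_range_add,
          Finset.sum_eq_zero fun i hi => by rw [hlow i (Finset.mem_range.1 hi), mul_zero], zero_add]
        exact Finset.sum_congr rfl fun d hd => by rw [hhigh d (Finset.mem_range.1 hd)]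
    _ = H (aeval F p ((⇑F)^[m - N] v)) := by
        rw [aeval_eq_sum_range, LinearMap.sum_apply, map_sum]
        refine Finset.sum_congr rfl fun d _ => ?_
        rw [LinearMap.smul_apply, map_smul, smul_eq_mul, Module.End.pow_apply,
          ← Function.iterate_add_apply, Nat.add_comm d, mul_comm]
    _ = 0 := by rw [hp, LinearMap.zero_apply, map_zero]

theorem stmt13 {k : Type*} [Field k] {n : ℕ}
    (F : (Fin n → k) →ₗ[k] (Fin n → k)) (H : (Fin n → k) →ₗ[k] k)
    (v : Fin n → k) :
    ∃ ρ τ : ℕ → k, (Function.support ρ).Finite ∧ (Function.support τ).Finite ∧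
      τ 0 ≠ 0 ∧ conv (fun m => H ((⇑F)^[m] v)) τ = ρ := by
  set p := F.charpoly
  have hvanish : ∀ m, p.natDegree ≤ m → conv (fun i => H ((⇑F)^[i] v)) p.reverse.coeff m = 0 :=
    fun _ => conv_iterate_reverse_coeff_eq_zero F H v F.aeval_self_charpoly
  refine ⟨_, p.reverse.coeff, ?_, p.reverse.support_coeff_finite, ?_, rfl⟩
  · exact (Set.finite_Iio p.natDegree).subset fun m hm => not_le.1 fun h => hm (hvanish m h)
  · rw [coeff_zero_reverse, F.charpoly_monic.leadingCoeff]
    exact one_ne_zero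
end

section
/- A stream σ over a field k is rational (a quotient of polynomial streams under convolution product) if and only if the subspace of k^ω spanned by the set {σ, σ', σ'', ...} of all iterated tails of σ is finite dimensional. -/
/-!
For `τ` vanishing beyond `d`, coefficient `m + d` of `σ × τ` is `∑ i ≤ d, τ (d - i) σ⁽ⁱ⁾ (m)`.
So `σ × τ` is finitely supported exactly when the tails satisfy, from some shift `B` on, the
linear relation `∑ i ≤ d, τ (d - i) σ⁽ⁱ⁺ᴮ⁾ = 0`, whose top coefficient is `τ 0`.
If `τ 0 ≠ 0` this expresses `σ⁽ᵈ⁺ᴮ⁾` through earlier tails, which makes the span of the first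
`d + B` tails shift-invariant and hence equal to the span of all tails. Conversely, finitely many
tails are linearly dependent in a finite-dimensional span, and reversing such a dependence
gives `τ`.
-/

open Finset Submodule

theorem tl_iterate_apply {A : Type*} (σ : ℕ → A) (i n : ℕ) : tl^[i] σ n = σ (n + i) := by
  induction i generalizing n with
  | zero => rfl
  | succ i ih => rw [Function.iterate_succ_apply', tl, ih, Nat.add_right_comm, Nat.add_assoc]

def tlₗ (R : Type*) [Semiring R] : (ℕ → R) →ₗ[R] (ℕ → R) where
  toFun := tl
  map_add' _ _ := rfl
  map_smul' _ _ := rfl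

theorem coe_tlₗ (R : Type*) [Semiring R] : ⇑(tlₗ R) = tl := rfl

theorem eq_zero_of_tl_iterate_eq_zero {A : Type*} [Zero A] {ρ : ℕ → A} {n j : ℕ}
    (h : tl^[n] ρ = 0) (hj : n ≤ j) : ρ j = 0 := by
  simpa [tl_iterate_apply, Nat.sub_add_cancel hj] using congrFun h (j - n)

theorem support_finite_iff_exists_forall_le {A : Type*} [Zero A] (ρ : ℕ → A) :
    (Function.support ρ).Finite ↔ ∃ n, ∀ j, n ≤ j → ρ j = 0 := by
  constructor
  · intro hρ
    obtain ⟨B, hB⟩ := hρ.bddAbove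
    exact ⟨B + 1, fun j hj => Function.notMem_support.mp fun h => by have := hB h; omega⟩
  · rintro ⟨n, hn⟩
    exact (Set.finite_Iio n).subset fun j hj => not_le.mp fun hnj => hj (hn j hnj)

theorem conv_add_eq_sum {A : Type*} [Semiring A] (σ τ : ℕ → A) {d : ℕ}
    (hτ : ∀ j, d < j → τ j = 0) (m : ℕ) :
    conv σ τ (m + d) = ∑ i ∈ range (d + 1), σ (m + i) * τ (d - i) := by
  rw [conv, Nat.add_assoc, sum_range_add]
  have hlow : ∑ i ∈ range m, σ i * τ (m + d - i) = 0 :=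
    sum_eq_zero fun i hi => by rw [hτ _ (by simp at hi; omega), mul_zero]
  rw [hlow, zero_add]
  refine sum_congr rfl fun i _ => ?_
  rw [Nat.add_sub_add_left]

theorem tl_iterate_conv_eq_sum {A : Type*} [CommSemiring A] (σ τ : ℕ → A) {d : ℕ}
    (hτ : ∀ j, d < j → τ j = 0) :
    tl^[d] (conv σ τ) = ∑ i ∈ range (d + 1), τ (d - i) • tl^[i] σ := by
  funext m
  simp only [tl_iterate_apply, conv_add_eq_sum σ τ hτ, Finset.sum_apply, Pi.smul_apply,
    smul_eq_mul, mul_comm]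

namespace LinearMap

variable {R M : Type*} [Semiring R] [AddCommMonoid M] [Module R M] (f : M →ₗ[R] M) (v : M)

theorem span_range_iterate_eq_of_mem {m : ℕ} (h : f^[m] v ∈ span R ((f^[·] v) '' Set.Iio m)) :
    span R (Set.range (f^[·] v)) = span R ((f^[·] v) '' Set.Iio m) := by
  set W := span R ((f^[·] v) '' Set.Iio m)
  have hW : W ≤ W.comap f := by
    rw [span_le]
    rintro _ ⟨i, hi, rfl⟩
    rw [SetLike.mem_coe, mem_comap, ← Function.iterate_succ_apply' f i v]
    rcases (Nat.succ_le_of_lt hi).lt_or_eq with hlt | heq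
    · exact subset_span ⟨i + 1, hlt, rfl⟩
    · rwa [heq]
  have hmem : ∀ n, f^[n] v ∈ W := by
    intro n
    induction n with
    | zero =>
      rcases Nat.eq_zero_or_pos m with rfl | hm
      · exact h
      · exact subset_span ⟨0, hm, rfl⟩
    | succ n ih => rw [Function.iterate_succ_apply']; exact hW ih
  refine le_antisymm (span_le.mpr ?_) (span_mono (Set.image_subset_range _ _))
  rintro _ ⟨n, rfl⟩
  exact hmem n

theorem finite_span_range_iterate_of_mem {m : ℕ}
    (h : f^[m] v ∈ span R ((f^[·] v) '' Set.Iio m)) :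
    Module.Finite R (span R (Set.range (f^[·] v))) := by
  rw [span_range_iterate_eq_of_mem f v h]
  exact Module.Finite.span_of_finite R ((Set.finite_Iio m).image _)

end LinearMap

section Relations

variable {K M : Type*} [DivisionRing K] [AddCommGroup M] [Module K M]

theorem mem_span_image_Iio_of_sum_range_smul_eq_zero {w : ℕ → M} {c : ℕ → K} {d : ℕ}
    (hc : c d ≠ 0) (h : ∑ i ∈ range (d + 1), c i • w i = 0) :
    w d ∈ span K (w '' Set.Iio d) := by
  rw [sum_range_succ, add_eq_zero_iff_eq_neg] at h
  have hw : w d = -((c d)⁻¹ • ∑ i ∈ range d, c i • w i) := by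
    rw [h, smul_neg, neg_neg, inv_smul_smul₀ hc]
  rw [hw]
  refine neg_mem (smul_mem _ _ (sum_mem fun i hi => smul_mem _ _ (subset_span ⟨i, ?_, rfl⟩)))
  simpa using hi

theorem exists_sum_range_smul_eq_zero_of_finite_span (w : ℕ → M)
    [Module.Finite K (span K (Set.range w))] :
    ∃ d, ∃ c : ℕ → K, c d ≠ 0 ∧ ∑ i ∈ range (d + 1), c i • w i = 0 := by
  classical
  have hdep : ¬LinearIndependent K w := fun hli =>
    Module.Finite.not_linearIndependent_of_infinite
      (fun n => (⟨w n, subset_span (Set.mem_range_self n)⟩ : span K (Set.range w)))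
      (LinearIndependent.of_comp (span K (Set.range w)).subtype hli)
  simp only [linearIndependent_iff, not_forall] at hdep
  obtain ⟨l, hl, hl0⟩ := hdep
  have hne : l.support.Nonempty := Finsupp.support_nonempty_iff.mpr hl0
  refine ⟨l.support.max' hne, l, Finsupp.mem_support_iff.mp (l.support.max'_mem hne), ?_⟩
  have hsupp : l.support ⊆ range (l.support.max' hne + 1) := fun i hi =>
    mem_range.mpr (Nat.lt_succ_of_le (l.support.le_max' i hi))
  rwa [Finsupp.linearCombination_apply,
    Finsupp.sum_of_support_subset l hsupp _ fun i _ => zero_smul K (w i)] at hl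

end Relations

section Field

variable {k : Type*} [Field k]

theorem finiteDimensional_span_tl_iterate_of_conv_eq {σ ρ τ : ℕ → k}
    (hρ : (Function.support ρ).Finite) (hτ : (Function.support τ).Finite) (hτ0 : τ 0 ≠ 0)
    (hconv : conv σ τ = ρ) :
    FiniteDimensional k (span k (Set.range fun n => tl^[n] σ)) := by
  obtain ⟨B, hB⟩ := (support_finite_iff_exists_forall_le ρ).mp hρ
  obtain ⟨d, hd⟩ := (support_finite_iff_exists_forall_le τ).mp hτ
  have hτd : ∀ j, d < j → τ j = 0 := fun j hj => hd j hj.le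
  have hrel : ∑ i ∈ range (d + 1), τ (d - i) • tl^[i + B] σ = 0 := by
    funext m
    have hzero : ρ (m + B + d) = 0 := hB _ (by omega)
    have := congrFun (tl_iterate_conv_eq_sum σ τ hτd) (m + B)
    rw [hconv, tl_iterate_apply, hzero] at this
    simpa [Finset.sum_apply, tl_iterate_apply, Nat.add_assoc, Nat.add_comm B] using this.symm
  have hmem := mem_span_image_Iio_of_sum_range_smul_eq_zero (w := fun i => tl^[i + B] σ)
    (by simpa using hτ0) hrel
  rw [← coe_tlₗ]
  refine LinearMap.finite_span_range_iterate_of_mem (tlₗ k) σ (m := d + B) (span_mono ?_ hmem)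
  rintro _ ⟨i, hi, rfl⟩
  exact ⟨i + B, by simpa using hi, rfl⟩

theorem exists_conv_eq_of_finiteDimensional_span_tl_iterate {σ : ℕ → k}
    [FiniteDimensional k (span k (Set.range fun n => tl^[n] σ))] :
    ∃ ρ τ : ℕ → k, (Function.support ρ).Finite ∧ (Function.support τ).Finite ∧
      τ 0 ≠ 0 ∧ conv σ τ = ρ := by
  obtain ⟨d, c, hcd, hrel⟩ :=
    exists_sum_range_smul_eq_zero_of_finite_span (K := k) fun n => tl^[n] σ
  -- reversing `c` makes its top coefficient `c d ≠ 0` the constant term `τ 0`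
  set τ : ℕ → k := fun j => if j ≤ d then c (d - j) else 0
  have hτd : ∀ j, d < j → τ j = 0 := fun j hj => if_neg (not_le.mpr hj)
  have htail : tl^[d] (conv σ τ) = 0 := by
    rw [tl_iterate_conv_eq_sum σ τ hτd, ← hrel]
    refine sum_congr rfl fun i hi => ?_
    have hi : i ≤ d := Nat.lt_succ_iff.mp (mem_range.mp hi)
    simp [τ, Nat.sub_sub_self hi]
  exact ⟨conv σ τ, τ,
    (support_finite_iff_exists_forall_le _).mpr ⟨d, fun _ => eq_zero_of_tl_iterate_eq_zero htail⟩,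
    (support_finite_iff_exists_forall_le _).mpr ⟨d + 1, hτd⟩, by simpa [τ] using hcd, rfl⟩

end Field

theorem stmt14 {k : Type*} [Field k] (σ : ℕ → k) :
    (∃ ρ τ : ℕ → k, (Function.support ρ).Finite ∧ (Function.support τ).Finite ∧
      τ 0 ≠ 0 ∧ conv σ τ = ρ) ↔
    FiniteDimensional k (Submodule.span k (Set.range fun n => tl^[n] σ)) :=
  ⟨fun ⟨_, _, hρ, hτ, hτ0, hconv⟩ => finiteDimensional_span_tl_iterate_of_conv_eq hρ hτ hτ0 hconv,
    fun _ => exists_conv_eq_of_finiteDimensional_span_tl_iterate⟩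
end

section
/- If σ is a rational stream over a field k with σ = ρ/τ for polynomial streams ρ of degree ≤ d₁ and τ of degree ≤ d₂ with τ(0) ≠ 0, then the span of the iterated tails of σ has dimension at most max(d₁, d₂) + 1 (in particular, it is finite dimensional). -/
lemma tl_iter {A : Type*} (σ : ℕ → A) (n m : ℕ) : tl^[n] σ m = σ (n + m) := by
  induction n generalizing σ m with
  | zero => simp
  | succ n ih =>
    rw [Function.iterate_succ_apply, ih]
    simp only [tl]
    congr 1
    omega

lemma key {k : Type*} [Field k] (σ ρ τ : ℕ → k) (d₁ d₂ : ℕ)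
    (hρ : ∀ m, d₁ < m → ρ m = 0) (hτ : ∀ m, d₂ < m → τ m = 0)
    (hτ0 : τ 0 ≠ 0) (h : conv σ τ = ρ) (n : ℕ) (hn : max d₁ d₂ < n) :
    tl^[n] σ = ∑ j ∈ Finset.range d₂, (-(τ (j+1) / τ 0)) • tl^[n - (j+1)] σ := by
  funext m
  set N := n + m with hNdef
  have e1 : ∑ i ∈ Finset.range (N + 1), σ i * τ (N - i) = 0 := by
    have : conv σ τ N = ρ N := congrFun h N
    rw [hρ N (by omega)] at this
    simpa [conv] using this
  have e2 : ∑ j ∈ Finset.range (N + 1), σ (N - j) * τ j = 0 := by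
    rw [← e1, ← Finset.sum_range_reflect (fun i => σ i * τ (N - i)) (N + 1)]
    apply Finset.sum_congr rfl
    intro j hj
    simp only [Finset.mem_range] at hj
    congr 2 <;> omega
  have e3 : ∑ j ∈ Finset.range (d₂ + 1), σ (N - j) * τ j = 0 := by
    rw [← e2]
    apply Finset.sum_subset
    · intro x hx
      simp only [Finset.mem_range] at *
      omega
    · intro x _ hx
      simp only [Finset.mem_range] at hx
      rw [hτ x (by omega), mul_zero]
  rw [Finset.sum_range_succ'] at e3
  simp only [Nat.sub_zero] at e3
  -- goal
  have hL : tl^[n] σ m = σ N := tl_iter σ n m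
  rw [hL]
  rw [Finset.sum_apply]
  have hterm : ∀ j ∈ Finset.range d₂,
      ((-(τ (j+1) / τ 0)) • tl^[n - (j+1)] σ) m
        = σ (N - (j+1)) * τ (j+1) * (-(τ 0)⁻¹) := by
    intro j hj
    simp only [Finset.mem_range] at hj
    have : n - (j+1) + m = N - (j+1) := by omega
    simp only [Pi.smul_apply, smul_eq_mul, tl_iter, this]
    rw [div_eq_mul_inv]
    ring
  rw [Finset.sum_congr rfl hterm, ← Finset.sum_mul]
  have hs : ∑ j ∈ Finset.range d₂, σ (N - (j+1)) * τ (j+1) = -(σ N * τ 0) := by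
    linear_combination e3
  rw [hs]
  field_simp

theorem stmt15 {k : Type*} [Field k] (σ ρ τ : ℕ → k) (d₁ d₂ : ℕ)
    (hρ : ∀ m, d₁ < m → ρ m = 0) (hτ : ∀ m, d₂ < m → τ m = 0)
    (hτ0 : τ 0 ≠ 0) (h : conv σ τ = ρ) :
    FiniteDimensional k (Submodule.span k (Set.range fun n => tl^[n] σ)) ∧
    Module.finrank k (Submodule.span k (Set.range fun n => tl^[n] σ)) ≤
      max d₁ d₂ + 1 := by
  classical
  set D := max d₁ d₂ with hD
  set T : Finset (ℕ → k) := (Finset.range (D + 1)).image (fun n => tl^[n] σ) with hT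
  have hmem : ∀ n, tl^[n] σ ∈ Submodule.span k (T : Set (ℕ → k)) := by
    intro n
    induction n using Nat.strong_induction_on with
    | _ n ih =>
      by_cases hn : n ≤ D
      · apply Submodule.subset_span
        simp only [hT, Finset.coe_image, Set.mem_image, Finset.mem_coe, Finset.mem_range]
        exact ⟨n, by omega, rfl⟩
      · rw [key σ ρ τ d₁ d₂ hρ hτ hτ0 h n (by omega)]
        apply Submodule.sum_mem
        intro j hj
        simp only [Finset.mem_range] at hj
        exact Submodule.smul_mem _ _ (ih (n - (j+1)) (by omega))
  have hspan : Submodule.span k (Set.range fun n => tl^[n] σ)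
      = Submodule.span k (T : Set (ℕ → k)) := by
    apply le_antisymm
    · rw [Submodule.span_le]
      rintro _ ⟨n, rfl⟩
      exact hmem n
    · apply Submodule.span_mono
      rintro x hx
      simp only [hT, Finset.coe_image, Set.mem_image, Finset.mem_coe, Finset.mem_range] at hx
      obtain ⟨n, _, rfl⟩ := hx
      exact ⟨n, rfl⟩
  rw [hspan]
  constructor
  · exact FiniteDimensional.span_of_finite k T.finite_toSet
  · calc Module.finrank k (Submodule.span k (T : Set (ℕ → k))) ≤ T.card :=
          finrank_span_finset_le_card T
      _ ≤ D + 1 := (Finset.card_image_le).trans (by simp)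
end

section
/- The stream σ over ℚ defined by σ(n) = 1 if n is a triangular number (n = k(k+1)/2 for some k ≥ 0) and σ(n) = 0 otherwise, is not rational: the span of its iterated tails in ℚ^ω is infinite dimensional. -/
open Classical in
lemma key_s16 (σ : ℕ → ℚ)
    (hσ : ∀ n, σ n = if ∃ m : ℕ, 2 * n = m * (m + 1) then 1 else 0)
    (d N : ℕ) (c : ℕ → ℚ)
    (hrec : ∀ m, N ≤ m → σ (m + d) = ∑ i ∈ Finset.range d, c i * σ (m + i)) : False := by
  set T : ℕ → ℕ := fun k => k * (k + 1) / 2 with hT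
  have h2T : ∀ k, 2 * T k = k * (k + 1) := fun k =>
    Nat.mul_div_cancel' (even_iff_two_dvd.mp (Nat.even_mul_succ_self k))
  have hTone : ∀ k, σ (T k) = 1 := by
    intro k; rw [hσ, if_pos ⟨k, h2T k⟩]
  have hTsucc : ∀ k, T (k + 1) = T k + (k + 1) := by
    intro k
    have h1 := h2T k
    have h2 := h2T (k + 1)
    have h3 : (k + 1) * (k + 1 + 1) = k * (k + 1) + 2 * (k + 1) := by ring
    omega
  have hTge : ∀ k, k ≤ T k := by
    intro k
    rcases k with _ | k
    · simp
    · have h1 := h2T (k + 1)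
      have h2 : (k + 1) * 2 ≤ (k + 1) * (k + 1 + 1) := Nat.mul_le_mul_left _ (by omega)
      omega
  have hbetween : ∀ k n, T k < n → n < T (k + 1) → σ n = 0 := by
    intro k n h1 h2
    rw [hσ, if_neg]
    rintro ⟨m, hm⟩
    have e1 := h2T k
    have e2 := h2T (k + 1)
    have hlt1 : 2 * T k < 2 * n := by omega
    have hlt2 : 2 * n < 2 * T (k + 1) := by omega
    rcases le_or_gt m k with h | h
    · have hle : m * (m + 1) ≤ k * (k + 1) := Nat.mul_le_mul h (by omega)
      linarith
    · have hle : (k + 1) * (k + 1 + 1) ≤ m * (m + 1) := Nat.mul_le_mul h (by omega)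
      linarith
  set k := max d N + 1 with hk
  set K := T k + 1 with hK
  have hNk : N ≤ k := by omega
  have hKN : N ≤ K := by have := hTge k; omega
  have hblock : ∀ i, i < d → σ (K + i) = 0 := by
    intro i hi
    refine hbetween k (K + i) (by omega) ?_
    rw [hTsucc k]
    omega
  have hzero : ∀ n, K ≤ n → σ n = 0 := by
    intro n
    induction n using Nat.strong_induction_on with
    | _ n ih =>
      intro hn
      rcases lt_or_ge n (K + d) with h | h
      · have hn' : n = K + (n - K) := by omega
        rw [hn']
        exact hblock _ (by omega)
      · have hrw : n = (n - d) + d := by omega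
        rw [hrw, hrec _ (by omega)]
        refine Finset.sum_eq_zero fun i hi => ?_
        rw [Finset.mem_range] at hi
        rw [ih (n - d + i) (by omega) (by omega), mul_zero]
  have hfin := hzero (T K) (by have := hTge K; omega)
  rw [hTone] at hfin
  exact one_ne_zero hfin

open Classical in
lemma key2 (σ : ℕ → ℚ)
    (hσ : ∀ n, σ n = if ∃ m : ℕ, 2 * n = m * (m + 1) then 1 else 0)
    (t : ℕ → ℚ) (d N : ℕ) (htd : t d ≠ 0)
    (h : ∀ n, N ≤ n → ∑ i ∈ Finset.range (d + 1), t i * σ (n + i) = 0) : False := by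
  apply key_s16 σ hσ d N (fun i => -(t d)⁻¹ * t i)
  intro m hm
  have h0 := h m hm
  rw [Finset.sum_range_succ] at h0
  have hsum : ∑ i ∈ Finset.range d, t i * σ (m + i) = -(t d * σ (m + d)) := by linarith
  have : ∑ i ∈ Finset.range d, (fun i => -(t d)⁻¹ * t i) i * σ (m + i)
      = -(t d)⁻¹ * ∑ i ∈ Finset.range d, t i * σ (m + i) := by
    rw [Finset.mul_sum]
    exact Finset.sum_congr rfl fun i _ => by ring
  rw [this, hsum]
  field_simp

lemma bound_of_finite {f : ℕ → ℚ} (hf : (Function.support f).Finite) :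
    ∃ D, ∀ j, D ≤ j → f j = 0 := by
  obtain ⟨b, hb⟩ := hf.bddAbove
  refine ⟨b + 1, fun j hj => ?_⟩
  by_contra h
  have := hb (Function.mem_support.mpr h)
  omega

lemma tl_iterate {A : Type*} (σ : ℕ → A) : ∀ i n, tl^[i] σ n = σ (n + i) := by
  intro i
  induction i with
  | zero => simp
  | succ i ih =>
    intro n
    rw [Function.iterate_succ_apply']
    show tl^[i] σ (n + 1) = σ (n + (i + 1))
    rw [ih]
    congr 1
    omega

open Classical in
theorem stmt16 (σ : ℕ → ℚ)
    (hσ : ∀ n, σ n = if ∃ m : ℕ, 2 * n = m * (m + 1) then 1 else 0) :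
    (¬ ∃ ρ τ : ℕ → ℚ, (Function.support ρ).Finite ∧ (Function.support τ).Finite ∧
      τ 0 ≠ 0 ∧ conv σ τ = ρ) ∧
    ¬ FiniteDimensional ℚ (Submodule.span ℚ (Set.range fun n => tl^[n] σ)) := by
  constructor
  · rintro ⟨ρ, τ, hρ, hτ, hτ0, hconv⟩
    obtain ⟨Dτ, hDτ⟩ := bound_of_finite hτ
    obtain ⟨Dρ, hDρ⟩ := bound_of_finite hρ
    set d := Dτ with hd
    set N := max Dρ 1 with hN
    refine key2 σ hσ (fun i => τ (d - i)) d N (by simpa using hτ0) ?_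
    intro m hm
    have hρ0 : ρ (m + d) = 0 := hDρ (m + d) (by omega)
    have h1 : conv σ τ (m + d) = 0 := by rw [hconv]; exact hρ0
    rw [conv] at h1
    -- reflect: ∑ i ∈ range (m+d+1), σ i * τ (m+d-i) = ∑ j, σ (m+d-j) * τ j
    have h2 : ∑ j ∈ Finset.range (m + d + 1), σ (m + d - j) * τ j = 0 := by
      rw [← h1]
      rw [← Finset.sum_range_reflect (fun i => σ i * τ (m + d - i)) (m + d + 1)]
      refine Finset.sum_congr rfl fun j hj => ?_
      rw [Finset.mem_range] at hj
      congr 2 <;> omega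
    have h3 : ∑ j ∈ Finset.range (d + 1), σ (m + d - j) * τ j = 0 := by
      rw [← h2]
      refine Finset.sum_subset (Finset.range_subset_range.mpr (by omega)) ?_
      intro j hj hj'
      rw [Finset.mem_range] at hj hj'
      rw [hDτ j (by omega), mul_zero]
    rw [← h3, ← Finset.sum_range_reflect (fun i => τ (d - i) * σ (m + i)) (d + 1)]
    refine Finset.sum_congr rfl fun j hj => ?_
    rw [Finset.mem_range] at hj
    have e1 : d - (d + 1 - 1 - j) = j := by omega
    have e2 : m + (d + 1 - 1 - j) = m + d - j := by omega
    rw [e1, e2, mul_comm]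
  · intro hfd
    set f : ℕ → Submodule.span ℚ (Set.range fun n => tl^[n] σ) :=
      fun n => ⟨tl^[n] σ, Submodule.subset_span ⟨n, rfl⟩⟩ with hf
    have hnli : ¬ LinearIndependent ℚ f :=
      Module.Finite.not_linearIndependent_of_infinite f
    rw [linearIndependent_iff] at hnli
    push_neg at hnli
    obtain ⟨l, hl0, hlne⟩ := hnli
    have hcoord : ∀ n, ∑ i ∈ l.support, l i * σ (n + i) = 0 := by
      intro n
      have h1 : ((Finsupp.linearCombination ℚ f l : _) : ℕ → ℚ) n = 0 := by
        rw [hl0]; rfl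
      rw [Finsupp.linearCombination_apply, Finsupp.sum] at h1
      rw [AddSubmonoidClass.coe_finset_sum] at h1
      simpa [tl_iterate, hf, Finset.sum_apply] using h1
    have hsupne : l.support.Nonempty := Finsupp.support_nonempty_iff.mpr hlne
    set D := l.support.max' hsupne with hD
    refine key2 σ hσ (fun i => l i) D 0 ?_ ?_
    · exact (Finsupp.mem_support_iff.mp (l.support.max'_mem hsupne))
    · intro n _
      rw [← hcoord n]
      refine (Finset.sum_subset ?_ ?_).symm
      · intro x hx
        rw [Finset.mem_range]
        exact Nat.lt_succ_of_le (l.support.le_max' x hx)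
      · intro x _ hx
        rw [Finsupp.notMem_support_iff.mp hx, zero_mul]
end

section
/- The set of rational streams over a field k is closed under addition, convolution product, and convolution inverse (of streams with nonzero initial value), and contains all polynomial streams; hence it forms a subring of the ring of streams. -/
def IsRat {k : Type*} [Field k] (σ : ℕ → k) : Prop :=
  ∃ ρ τ : ℕ → k, (Function.support ρ).Finite ∧ (Function.support τ).Finite ∧
    τ 0 ≠ 0 ∧ conv σ τ = ρ

/-! Identify a stream with its generating power series via `PowerSeries.mk`, which turns `conv`
into multiplication. Closure is then clearing denominators: from `σ q₁ = p₁` and `τ q₂ = p₂` we get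
`(σ + τ) q₁ q₂ = p₁ q₂ + p₂ q₁` and `σ τ q₁ q₂ = p₁ p₂`, while `ρ σ = 1` and `σ q = p` give
`ρ p = q`; products of polynomials are polynomials and constant terms multiply. -/

open PowerSeries Pointwise

section Semiring

variable {A : Type*} [Semiring A]

theorem PowerSeries.mk_injective : Function.Injective (mk : (ℕ → A) → PowerSeries A) :=
  fun σ τ h => funext fun n => by simpa using congrArg (coeff n) h

theorem PowerSeries.mk_add (σ τ : ℕ → A) : mk (σ + τ) = mk σ + mk τ := by
  ext n
  simp

theorem mk_conv (σ τ : ℕ → A) : mk (conv σ τ) = mk σ * mk τ := by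
  ext n
  simp [coeff_mul, conv, Finset.Nat.sum_antidiagonal_eq_sum_range_succ_mk]

theorem conv_eq_iff_mk_mul_eq {σ τ ρ : ℕ → A} : conv σ τ = ρ ↔ mk σ * mk τ = mk ρ := by
  rw [← mk_conv, mk_injective.eq_iff]

theorem mk_cst (a : A) : mk (cst a) = C a := by
  ext n
  simp [cst, coeff_C]

theorem conv_apply_zero (σ τ : ℕ → A) : conv σ τ 0 = σ 0 * τ 0 := by
  simp [conv]

theorem support_conv_subset (σ τ : ℕ → A) :
    Function.support (conv σ τ) ⊆ Function.support σ + Function.support τ := by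
  intro n hn
  obtain ⟨i, hi, hne⟩ := Finset.exists_ne_zero_of_sum_ne_zero hn
  refine ⟨i, left_ne_zero_of_mul hne, n - i, right_ne_zero_of_mul hne, ?_⟩
  have := Finset.mem_range.mp hi
  show i + (n - i) = n
  omega

theorem support_conv_finite {σ τ : ℕ → A} (hσ : (Function.support σ).Finite)
    (hτ : (Function.support τ).Finite) : (Function.support (conv σ τ)).Finite :=
  (hσ.add hτ).subset (support_conv_subset σ τ)

theorem support_cst_finite (a : A) : (Function.support (cst a)).Finite :=
  (Set.finite_singleton 0).subset fun _ hn => by_contra fun h => hn (if_neg h)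

end Semiring

section Field

variable {k : Type*} [Field k]

theorem IsRat.add {σ τ : ℕ → k} (hσ : IsRat σ) (hτ : IsRat τ) : IsRat (σ + τ) := by
  obtain ⟨ρ₁, τ₁, hρ₁, hτ₁, h₁, he₁⟩ := hσ
  obtain ⟨ρ₂, τ₂, hρ₂, hτ₂, h₂, he₂⟩ := hτ
  refine ⟨conv ρ₁ τ₂ + conv ρ₂ τ₁, conv τ₁ τ₂,
    ((support_conv_finite hρ₁ hτ₂).union (support_conv_finite hρ₂ hτ₁)).subset
      (Function.support_add _ _),
    support_conv_finite hτ₁ hτ₂, by simp [conv_apply_zero, h₁, h₂], ?_⟩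
  rw [conv_eq_iff_mk_mul_eq] at he₁ he₂ ⊢
  rw [mk_add, mk_add, mk_conv, mk_conv, mk_conv]
  linear_combination mk τ₂ * he₁ + mk τ₁ * he₂

theorem IsRat.of_conv_eq_cst_one {σ ρ : ℕ → k} (hσ : IsRat σ) (hσ₀ : σ 0 ≠ 0)
    (hinv : conv ρ σ = cst 1) : IsRat ρ := by
  obtain ⟨π, τ, hπ, hτ, hτ₀, he⟩ := hσ
  have hπ₀ : π 0 ≠ 0 := by
    rw [← he, conv_apply_zero]
    exact mul_ne_zero hσ₀ hτ₀
  refine ⟨τ, π, hτ, hπ, hπ₀, ?_⟩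
  rw [conv_eq_iff_mk_mul_eq] at he hinv ⊢
  rw [mk_cst, map_one] at hinv
  linear_combination -(mk ρ * he) + mk τ * hinv

theorem IsRat.conv {σ τ : ℕ → k} (hσ : IsRat σ) (hτ : IsRat τ) : IsRat (conv σ τ) := by
  obtain ⟨ρ₁, τ₁, hρ₁, hτ₁, h₁, he₁⟩ := hσ
  obtain ⟨ρ₂, τ₂, hρ₂, hτ₂, h₂, he₂⟩ := hτ
  refine ⟨_root_.conv ρ₁ ρ₂, _root_.conv τ₁ τ₂, support_conv_finite hρ₁ hρ₂,
    support_conv_finite hτ₁ hτ₂, by simp [conv_apply_zero, h₁, h₂], ?_⟩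
  rw [conv_eq_iff_mk_mul_eq] at he₁ he₂ ⊢
  rw [mk_conv, mk_conv, mk_conv]
  linear_combination mk σ * mk τ₁ * he₂ + mk ρ₂ * he₁

theorem isRat_of_support_finite {π : ℕ → k} (hπ : (Function.support π).Finite) : IsRat π :=
  ⟨π, cst 1, hπ, support_cst_finite 1, by simp [cst], by
    rw [conv_eq_iff_mk_mul_eq, mk_cst, map_one, mul_one]⟩

end Field

theorem stmt18 {k : Type*} [Field k] :
    (∀ σ τ : ℕ → k, IsRat σ → IsRat τ → IsRat (σ + τ)) ∧
    (∀ σ τ : ℕ → k, IsRat σ → IsRat τ → IsRat (conv σ τ)) ∧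
    (∀ σ ρ : ℕ → k, IsRat σ → σ 0 ≠ 0 → conv ρ σ = cst 1 → IsRat ρ) ∧
    (∀ π : ℕ → k, (Function.support π).Finite → IsRat π) :=
  ⟨fun _ _ => IsRat.add, fun _ _ => IsRat.conv, fun _ _ => IsRat.of_conv_eq_cst_one,
    fun _ => isRat_of_support_finite⟩
end
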